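/- The symmetry rule Symm is admissible in G3i^=⁻: for all terms s, r and finite multisets Γ, Δ of formulas, if the sequent s = r, Γ ⇒ Δ is derivable in G3i^=⁻, then the sequent r = s, Γ ⇒ Δ is derivable in G3i^=⁻. -/

import Mathlib

open FirstOrder Language Multiset

universe u v

variable {L : FirstOrder.Language.{u, v}}

/-- Number of occurrences of the variable `v` in a term. -/
def tCount (v : ℕ) : L.Term ℕ → ℕ
  | .var w => if w = v then 1 else 0
  | .func _ ts => Finset.univ.sum fun i => tCount v (ts i)

/-- First-order formulas over the language `L` (with built-in equality),
with natural numbers as variables. -/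
inductive Fm (L : FirstOrder.Language.{u, v}) : Type (max u v) where
  | falsum : Fm L
  | equal : L.Term ℕ → L.Term ℕ → Fm L
  | rel {l : ℕ} : L.Relations l → (Fin l → L.Term ℕ) → Fm L
  | and : Fm L → Fm L → Fm L
  | or : Fm L → Fm L → Fm L
  | imp : Fm L → Fm L → Fm L
  | all : ℕ → Fm L → Fm L
  | ex : ℕ → Fm L → Fm L

namespace Fm

/-- Atomic formulas: equalities and relational atoms. -/
inductive IsAtomic : Fm L → Prop where
  | equal (t₁ t₂ : L.Term ℕ) : (Fm.equal t₁ t₂).IsAtomic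
  | rel {l : ℕ} (R : L.Relations l) (ts : Fin l → L.Term ℕ) : (Fm.rel R ts).IsAtomic

/-- Number of free occurrences of the variable `v` in a formula. -/
def fCount (v : ℕ) : Fm L → ℕ
  | falsum => 0
  | equal t₁ t₂ => tCount v t₁ + tCount v t₂
  | rel _ ts => Finset.univ.sum fun i => tCount v (ts i)
  | and A B => fCount v A + fCount v B
  | or A B => fCount v A + fCount v B
  | imp A B => fCount v A + fCount v B
  | all y A => if y = v then 0 else fCount v A
  | ex y A => if y = v then 0 else fCount v A

/-- The set of free variables of a formula. -/
def freeVars : Fm L → Set ℕ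
  | falsum => ∅
  | equal t₁ t₂ => {w | tCount w t₁ ≠ 0 ∨ tCount w t₂ ≠ 0}
  | rel _ ts => {w | ∃ i, tCount w (ts i) ≠ 0}
  | and A B => A.freeVars ∪ B.freeVars
  | or A B => A.freeVars ∪ B.freeVars
  | imp A B => A.freeVars ∪ B.freeVars
  | all y A => A.freeVars \ {y}
  | ex y A => A.freeVars \ {y}

/-- Simultaneous substitution of terms for the free variables of a formula. -/
def ssub (σ : ℕ → L.Term ℕ) : Fm L → Fm L
  | falsum => falsum
  | equal t₁ t₂ => equal (t₁.subst σ) (t₂.subst σ)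
  | rel R ts => rel R fun i => (ts i).subst σ
  | and A B => and (A.ssub σ) (B.ssub σ)
  | or A B => or (A.ssub σ) (B.ssub σ)
  | imp A B => imp (A.ssub σ) (B.ssub σ)
  | all y A => all y (A.ssub (Function.update σ y (Term.var y)))
  | ex y A => ex y (A.ssub (Function.update σ y (Term.var y)))

/-- `A.subst v t` is `A[v/t]`, the substitution of the term `t`
for the variable `v` in `A`. -/
def subst (v : ℕ) (t : L.Term ℕ) (A : Fm L) : Fm L :=
  A.ssub (Function.update (Term.var : ℕ → L.Term ℕ) v t)

/-- `t` is free for `x` in `A` (no free occurrence of `x` lies in the scope of a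
quantifier binding a variable of `t`). -/
def freeFor (t : L.Term ℕ) (x : ℕ) : Fm L → Prop
  | falsum => True
  | equal _ _ => True
  | rel _ _ => True
  | and A B => freeFor t x A ∧ freeFor t x B
  | or A B => freeFor t x A ∧ freeFor t x B
  | imp A B => freeFor t x A ∧ freeFor t x B
  | all y A => x = y ∨ x ∉ A.freeVars ∨ (tCount y t = 0 ∧ freeFor t x A)
  | ex y A => x = y ∨ x ∉ A.freeVars ∨ (tCount y t = 0 ∧ freeFor t x A)

end Fm

/-- The rule Repl, given as the relation between the antecedent of the premiss and the
antecedent of the conclusion (the succedent is unchanged): from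
`s = r, P[v/s], P[v/r], Γ ⇒ Δ` infer `s = r, P[v/s], Γ ⇒ Δ`, for `P` atomic and
`v` not occurring in `s, r`. -/
def ReplFull (L : FirstOrder.Language.{u, v}) : Multiset (Fm L) → Multiset (Fm L) → Prop := fun Γp Γc =>
  ∃ (s r : L.Term ℕ) (v : ℕ) (P : Fm L) (Γ : Multiset (Fm L)),
    P.IsAtomic ∧ tCount v s = 0 ∧ tCount v r = 0 ∧
    Γp = Fm.equal s r ::ₘ P.subst v s ::ₘ P.subst v r ::ₘ Γ ∧
    Γc = Fm.equal s r ::ₘ P.subst v s ::ₘ Γ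

/-- The rule Repl⁻: from `s = r, P[v/r], Γ ⇒ Δ` infer `s = r, P[v/s], Γ ⇒ Δ`,
for `P` atomic and `v` not occurring in `s, r`. -/
def ReplMinus (L : FirstOrder.Language.{u, v}) : Multiset (Fm L) → Multiset (Fm L) → Prop := fun Γp Γc =>
  ∃ (s r : L.Term ℕ) (v : ℕ) (P : Fm L) (Γ : Multiset (Fm L)),
    P.IsAtomic ∧ tCount v s = 0 ∧ tCount v r = 0 ∧
    Γp = Fm.equal s r ::ₘ P.subst v r ::ₘ Γ ∧
    Γc = Fm.equal s r ::ₘ P.subst v s ::ₘ Γ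

/-- The rule Repl₁⁻: Repl⁻ restricted to atomic `P` with exactly one occurrence of `v`. -/
def ReplMinus1 (L : FirstOrder.Language.{u, v}) : Multiset (Fm L) → Multiset (Fm L) → Prop := fun Γp Γc =>
  ∃ (s r : L.Term ℕ) (v : ℕ) (P : Fm L) (Γ : Multiset (Fm L)),
    P.IsAtomic ∧ tCount v s = 0 ∧ tCount v r = 0 ∧ Fm.fCount v P = 1 ∧
    Γp = Fm.equal s r ::ₘ P.subst v r ::ₘ Γ ∧
    Γc = Fm.equal s r ::ₘ P.subst v s ::ₘ Γ

/-- `DerC rp n Γ Δ`: the sequent `Γ ⇒ Δ` has a derivation of height at most `n` in the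
classical multisuccedent G3 calculus `G3c` with the equality rule Ref and the
replacement rule given by `rp` (e.g. `ReplFull L` for `G3c^=`, `ReplMinus L` for `G3c^=⁻`,
`ReplMinus1 L` for `G3c₁^=⁻`). -/
inductive DerC (rp : Multiset (Fm L) → Multiset (Fm L) → Prop) :
    ℕ → Multiset (Fm L) → Multiset (Fm L) → Prop where
  | ax {n : ℕ} {Γ Δ : Multiset (Fm L)} {P : Fm L} (hP : P.IsAtomic) :
      DerC rp n (P ::ₘ Γ) (P ::ₘ Δ)
  | botL {n : ℕ} {Γ Δ : Multiset (Fm L)} : DerC rp n (Fm.falsum ::ₘ Γ) Δ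
  | andL {n : ℕ} {Γ Δ : Multiset (Fm L)} {A B : Fm L} :
      DerC rp n (A ::ₘ B ::ₘ Γ) Δ → DerC rp (n + 1) (Fm.and A B ::ₘ Γ) Δ
  | andR {n : ℕ} {Γ Δ : Multiset (Fm L)} {A B : Fm L} :
      DerC rp n Γ (A ::ₘ Δ) → DerC rp n Γ (B ::ₘ Δ) → DerC rp (n + 1) Γ (Fm.and A B ::ₘ Δ)
  | orL {n : ℕ} {Γ Δ : Multiset (Fm L)} {A B : Fm L} :
      DerC rp n (A ::ₘ Γ) Δ → DerC rp n (B ::ₘ Γ) Δ → DerC rp (n + 1) (Fm.or A B ::ₘ Γ) Δ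
  | orR {n : ℕ} {Γ Δ : Multiset (Fm L)} {A B : Fm L} :
      DerC rp n Γ (A ::ₘ B ::ₘ Δ) → DerC rp (n + 1) Γ (Fm.or A B ::ₘ Δ)
  | impL {n : ℕ} {Γ Δ : Multiset (Fm L)} {A B : Fm L} :
      DerC rp n Γ (A ::ₘ Δ) → DerC rp n (B ::ₘ Γ) Δ → DerC rp (n + 1) (Fm.imp A B ::ₘ Γ) Δ
  | impR {n : ℕ} {Γ Δ : Multiset (Fm L)} {A B : Fm L} :
      DerC rp n (A ::ₘ Γ) (B ::ₘ Δ) → DerC rp (n + 1) Γ (Fm.imp A B ::ₘ Δ)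
  | allL {n : ℕ} {Γ Δ : Multiset (Fm L)} {x : ℕ} {t : L.Term ℕ} {A : Fm L}
      (hf : Fm.freeFor t x A) :
      DerC rp n (A.subst x t ::ₘ Fm.all x A ::ₘ Γ) Δ → DerC rp (n + 1) (Fm.all x A ::ₘ Γ) Δ
  | allR {n : ℕ} {Γ Δ : Multiset (Fm L)} {x y : ℕ} {A : Fm L}
      (hf : Fm.freeFor (Term.var y) x A) (hy : y ∉ (Fm.all x A).freeVars)
      (hΓ : ∀ C ∈ Γ, y ∉ Fm.freeVars C) (hΔ : ∀ C ∈ Δ, y ∉ Fm.freeVars C) :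
      DerC rp n Γ (A.subst x (Term.var y) ::ₘ Δ) → DerC rp (n + 1) Γ (Fm.all x A ::ₘ Δ)
  | exL {n : ℕ} {Γ Δ : Multiset (Fm L)} {x y : ℕ} {A : Fm L}
      (hf : Fm.freeFor (Term.var y) x A) (hy : y ∉ (Fm.ex x A).freeVars)
      (hΓ : ∀ C ∈ Γ, y ∉ Fm.freeVars C) (hΔ : ∀ C ∈ Δ, y ∉ Fm.freeVars C) :
      DerC rp n (A.subst x (Term.var y) ::ₘ Γ) Δ → DerC rp (n + 1) (Fm.ex x A ::ₘ Γ) Δ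
  | exR {n : ℕ} {Γ Δ : Multiset (Fm L)} {x : ℕ} {t : L.Term ℕ} {A : Fm L}
      (hf : Fm.freeFor t x A) :
      DerC rp n Γ (A.subst x t ::ₘ Fm.ex x A ::ₘ Δ) → DerC rp (n + 1) Γ (Fm.ex x A ::ₘ Δ)
  | ref {n : ℕ} {Γ Δ : Multiset (Fm L)} (t : L.Term ℕ) :
      DerC rp n (Fm.equal t t ::ₘ Γ) Δ → DerC rp (n + 1) Γ Δ
  | repl {n : ℕ} {Γp Γc Δ : Multiset (Fm L)} (h : rp Γp Γc) :
      DerC rp n Γp Δ → DerC rp (n + 1) Γc Δ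

/-- `DerI rp n Γ Δ`: the sequent `Γ ⇒ Δ` has a derivation of height at most `n` in the
intuitionistic multisuccedent G3 calculus (the right rules for `→` and `∀` have
single-succedent premisses, and L→ repeats its principal formula) with the equality rule
Ref and the replacement rule given by `rp`. -/
inductive DerI (rp : Multiset (Fm L) → Multiset (Fm L) → Prop) :
    ℕ → Multiset (Fm L) → Multiset (Fm L) → Prop where
  | ax {n : ℕ} {Γ Δ : Multiset (Fm L)} {P : Fm L} (hP : P.IsAtomic) :
      DerI rp n (P ::ₘ Γ) (P ::ₘ Δ)
  | botL {n : ℕ} {Γ Δ : Multiset (Fm L)} : DerI rp n (Fm.falsum ::ₘ Γ) Δ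
  | andL {n : ℕ} {Γ Δ : Multiset (Fm L)} {A B : Fm L} :
      DerI rp n (A ::ₘ B ::ₘ Γ) Δ → DerI rp (n + 1) (Fm.and A B ::ₘ Γ) Δ
  | andR {n : ℕ} {Γ Δ : Multiset (Fm L)} {A B : Fm L} :
      DerI rp n Γ (A ::ₘ Δ) → DerI rp n Γ (B ::ₘ Δ) → DerI rp (n + 1) Γ (Fm.and A B ::ₘ Δ)
  | orL {n : ℕ} {Γ Δ : Multiset (Fm L)} {A B : Fm L} :
      DerI rp n (A ::ₘ Γ) Δ → DerI rp n (B ::ₘ Γ) Δ → DerI rp (n + 1) (Fm.or A B ::ₘ Γ) Δ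
  | orR {n : ℕ} {Γ Δ : Multiset (Fm L)} {A B : Fm L} :
      DerI rp n Γ (A ::ₘ B ::ₘ Δ) → DerI rp (n + 1) Γ (Fm.or A B ::ₘ Δ)
  | impL {n : ℕ} {Γ Δ : Multiset (Fm L)} {A B : Fm L} :
      DerI rp n (Fm.imp A B ::ₘ Γ) (A ::ₘ Δ) → DerI rp n (B ::ₘ Γ) Δ →
      DerI rp (n + 1) (Fm.imp A B ::ₘ Γ) Δ
  | impR {n : ℕ} {Γ Δ : Multiset (Fm L)} {A B : Fm L} :
      DerI rp n (A ::ₘ Γ) {B} → DerI rp (n + 1) Γ (Fm.imp A B ::ₘ Δ)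
  | allL {n : ℕ} {Γ Δ : Multiset (Fm L)} {x : ℕ} {t : L.Term ℕ} {A : Fm L}
      (hf : Fm.freeFor t x A) :
      DerI rp n (A.subst x t ::ₘ Fm.all x A ::ₘ Γ) Δ → DerI rp (n + 1) (Fm.all x A ::ₘ Γ) Δ
  | allR {n : ℕ} {Γ Δ : Multiset (Fm L)} {x y : ℕ} {A : Fm L}
      (hf : Fm.freeFor (Term.var y) x A) (hy : y ∉ (Fm.all x A).freeVars)
      (hΓ : ∀ C ∈ Γ, y ∉ Fm.freeVars C) :
      DerI rp n Γ {A.subst x (Term.var y)} → DerI rp (n + 1) Γ (Fm.all x A ::ₘ Δ)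
  | exL {n : ℕ} {Γ Δ : Multiset (Fm L)} {x y : ℕ} {A : Fm L}
      (hf : Fm.freeFor (Term.var y) x A) (hy : y ∉ (Fm.ex x A).freeVars)
      (hΓ : ∀ C ∈ Γ, y ∉ Fm.freeVars C) (hΔ : ∀ C ∈ Δ, y ∉ Fm.freeVars C) :
      DerI rp n (A.subst x (Term.var y) ::ₘ Γ) Δ → DerI rp (n + 1) (Fm.ex x A ::ₘ Γ) Δ
  | exR {n : ℕ} {Γ Δ : Multiset (Fm L)} {x : ℕ} {t : L.Term ℕ} {A : Fm L}
      (hf : Fm.freeFor t x A) :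
      DerI rp n Γ (A.subst x t ::ₘ Fm.ex x A ::ₘ Δ) → DerI rp (n + 1) Γ (Fm.ex x A ::ₘ Δ)
  | ref {n : ℕ} {Γ Δ : Multiset (Fm L)} (t : L.Term ℕ) :
      DerI rp n (Fm.equal t t ::ₘ Γ) Δ → DerI rp (n + 1) Γ Δ
  | repl {n : ℕ} {Γp Γc Δ : Multiset (Fm L)} (h : rp Γp Γc) :
      DerI rp n Γp Δ → DerI rp (n + 1) Γc Δ

/-!
Weaken `s = r, Γ ⇒ Δ` to `r = s, s = r, Γ ⇒ Δ`; this is height-preserving because `r = s` has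
the same variables as the atom `s = r`, so it cannot clash with an eigenvariable. For `v` fresh,
`s = r` and `r = r` are `(v = r)[v/s]` and `(v = r)[v/r]`, so Repl⁻ with principal equation
`r = s` gives `r = s, r = r, Γ ⇒ Δ`, and Ref removes `r = r`.
-/

namespace FirstOrder.Language.Term

variable {α β : Type*} [DecidableEq α] [DecidableEq β]

theorem varFinset_subst (t : L.Term α) (σ : α → L.Term β) :
    (t.subst σ).varFinset = t.varFinset.biUnion fun u => (σ u).varFinset := by
  induction t with
  | var u => simp [subst, varFinset]
  | func f ts ih => simp only [subst, varFinset, ih, Finset.biUnion_biUnion]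

theorem subst_eq_self {t : L.Term α} {σ : α → L.Term α} (h : ∀ u ∈ t.varFinset, σ u = var u) :
    t.subst σ = t := by
  induction t with
  | var u => simpa [subst, varFinset] using h
  | func f ts ih =>
    simp only [subst, varFinset, Finset.mem_biUnion, Finset.mem_univ, true_and] at h ⊢
    exact congrArg _ (funext fun i => ih i fun u hu => h u ⟨i, hu⟩)

theorem varFinset_subst_update_subset (t : L.Term α) (v : α) (s r : L.Term α) :
    (t.subst (Function.update var v s)).varFinset ⊆
      s.varFinset ∪ (t.subst (Function.update var v r)).varFinset := by
  intro w hw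
  simp only [varFinset_subst, Finset.mem_biUnion, Finset.mem_union] at hw ⊢
  obtain ⟨u, hu, hw⟩ := hw
  by_cases huv : u = v
  · subst huv
    exact Or.inl (by simpa using hw)
  · right
    refine ⟨u, hu, ?_⟩
    simp_all [varFinset]

end FirstOrder.Language.Term

theorem tCount_ne_zero_iff {w : ℕ} {t : L.Term ℕ} : tCount w t ≠ 0 ↔ w ∈ t.varFinset := by
  induction t with
  | var u => simp [tCount, Term.varFinset, eq_comm]
  | func f ts ih => simp [tCount, Term.varFinset, Finset.sum_eq_zero_iff, ih]

namespace Fm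

theorem IsAtomic.ssub {P : Fm L} (hP : P.IsAtomic) (σ : ℕ → L.Term ℕ) : (P.ssub σ).IsAtomic := by
  cases hP with
  | equal t₁ t₂ => exact .equal _ _
  | rel R ts => exact .rel _ _

theorem freeVars_equal (t₁ t₂ : L.Term ℕ) :
    (equal t₁ t₂).freeVars = ↑(t₁.varFinset ∪ t₂.varFinset) := by
  ext w
  simp [freeVars, tCount_ne_zero_iff]

theorem IsAtomic.freeVars_subst_subset {P : Fm L} (hP : P.IsAtomic) (v : ℕ) (s r : L.Term ℕ) :
    (P.subst v s).freeVars ⊆ ↑s.varFinset ∪ (P.subst v r).freeVars := by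
  have key := fun t => Term.varFinset_subst_update_subset t v s r
  intro w hw
  cases hP with
  | equal t₁ t₂ =>
    simp only [subst, Fm.ssub, freeVars_equal, Finset.coe_union, Set.mem_union,
      Finset.mem_coe] at hw ⊢
    rcases hw with h | h <;> rcases Finset.mem_union.mp (key _ h) with h' | h' <;> tauto
  | rel R ts =>
    simp only [subst, Fm.ssub, freeVars, Set.mem_ofPred_eq, tCount_ne_zero_iff, Set.mem_union,
      Finset.mem_coe] at hw ⊢
    obtain ⟨i, hi⟩ := hw
    exact (Finset.mem_union.mp (key (ts i) hi)).imp id fun h => ⟨i, h⟩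

end Fm

def atomicVars (Γ : Multiset (Fm L)) : Set ℕ :=
  {w | ∃ C ∈ Γ, C.IsAtomic ∧ w ∈ C.freeVars}

theorem atomicVars_cons (C : Fm L) (Γ : Multiset (Fm L)) :
    atomicVars (C ::ₘ Γ) = {w | C.IsAtomic ∧ w ∈ C.freeVars} ∪ atomicVars Γ := by
  ext w
  simp [atomicVars]

theorem atomicVars_subset_cons (C : Fm L) (Γ : Multiset (Fm L)) :
    atomicVars Γ ⊆ atomicVars (C ::ₘ Γ) := by
  rw [atomicVars_cons]
  exact Set.subset_union_right

theorem atomicVars_cons_of_not_isAtomic {C : Fm L} {Γ : Multiset (Fm L)} (hC : ¬C.IsAtomic) :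
    atomicVars (C ::ₘ Γ) = atomicVars Γ := by
  simp [atomicVars_cons, hC]

theorem notMem_freeVars_of_subset_atomicVars {W : Fm L} {Γ : Multiset (Fm L)} {y : ℕ}
    (hW : W.freeVars ⊆ atomicVars Γ) (hΓ : ∀ C ∈ Γ, y ∉ C.freeVars) : y ∉ W.freeVars :=
  fun hy => by
    obtain ⟨C, hC, -, hyC⟩ := hW hy
    exact hΓ C hC hyC

theorem replMinus_cons {Γp Γc : Multiset (Fm L)} (W : Fm L) (h : ReplMinus L Γp Γc) :
    ReplMinus L (W ::ₘ Γp) (W ::ₘ Γc) := by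
  obtain ⟨s, r, v, P, Γ, hP, hs, hr, rfl, rfl⟩ := h
  exact ⟨s, r, v, P, W ::ₘ Γ, hP, hs, hr, by simp only [cons_swap W], by simp only [cons_swap W]⟩

theorem atomicVars_subset_of_replMinus {Γp Γc : Multiset (Fm L)} (h : ReplMinus L Γp Γc) :
    atomicVars Γc ⊆ atomicVars Γp := by
  obtain ⟨s, r, v, P, Γ, hP, -, -, rfl, rfl⟩ := h
  have hs : (s.varFinset : Set ℕ) ⊆ (Fm.equal s r).freeVars := by
    rw [Fm.freeVars_equal]
    exact Finset.coe_subset.mpr Finset.subset_union_left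
  simp only [atomicVars_cons]
  rintro w (hw | hw | hw)
  · exact Or.inl hw
  · rcases hP.freeVars_subst_subset v s r hw.2 with h | h
    · exact Or.inl ⟨.equal s r, hs h⟩
    · exact Or.inr (Or.inl ⟨hP.ssub _, h⟩)
  · exact Or.inr (Or.inr hw)

/-- `W` cannot clash with an eigenvariable, and the bound `W.freeVars ⊆ atomicVars Γ` survives
upwards: atomic formulas are never principal in the logical rules, and the hypotheses on `rp`
say that the replacement rule preserves it. -/
theorem DerI.weaken {rp : Multiset (Fm L) → Multiset (Fm L) → Prop}
    (rp_cons : ∀ {Γp Γc} (W : Fm L), rp Γp Γc → rp (W ::ₘ Γp) (W ::ₘ Γc))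
    (atomicVars_subset_of_rp : ∀ {Γp Γc}, rp Γp Γc → atomicVars Γc ⊆ atomicVars Γp)
    {n : ℕ} {Γ Δ : Multiset (Fm L)} (h : DerI rp n Γ Δ) :
    ∀ {W : Fm L}, W.freeVars ⊆ atomicVars Γ → DerI rp n (W ::ₘ Γ) Δ := by
  induction h with
  | ax hP => intro W _; rw [cons_swap]; exact .ax hP
  | botL => intro W _; rw [cons_swap]; exact .botL
  | andL _ ih =>
    intro W hW
    rw [atomicVars_cons_of_not_isAtomic (by rintro ⟨⟩)] at hW
    have := ih (hW.trans ((atomicVars_subset_cons _ _).trans (atomicVars_subset_cons _ _)))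
    rw [cons_swap W, cons_swap W] at this
    rw [cons_swap]
    exact .andL this
  | andR _ _ ih₁ ih₂ => intro W hW; exact .andR (ih₁ hW) (ih₂ hW)
  | orL _ _ ih₁ ih₂ =>
    intro W hW
    rw [atomicVars_cons_of_not_isAtomic (by rintro ⟨⟩)] at hW
    have h₁ := ih₁ (hW.trans (atomicVars_subset_cons _ _))
    have h₂ := ih₂ (hW.trans (atomicVars_subset_cons _ _))
    rw [cons_swap W] at h₁ h₂
    rw [cons_swap]
    exact .orL h₁ h₂
  | orR _ ih => intro W hW; exact .orR (ih hW)
  | impL _ _ ih₁ ih₂ =>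
    intro W hW
    have h₁ := ih₁ hW
    rw [atomicVars_cons_of_not_isAtomic (by rintro ⟨⟩)] at hW
    have h₂ := ih₂ (hW.trans (atomicVars_subset_cons _ _))
    rw [cons_swap W] at h₁ h₂
    rw [cons_swap]
    exact .impL h₁ h₂
  | impR _ ih =>
    intro W hW
    have := ih (hW.trans (atomicVars_subset_cons _ _))
    rw [cons_swap W] at this
    exact .impR this
  | allL hf _ ih =>
    intro W hW
    have := ih (hW.trans (atomicVars_subset_cons _ _))
    rw [cons_swap W, cons_swap W] at this
    rw [cons_swap]
    exact .allL hf this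
  | allR hf hy hΓ _ ih =>
    intro W hW
    exact .allR hf hy
      (forall_mem_cons.mpr ⟨notMem_freeVars_of_subset_atomicVars hW hΓ, hΓ⟩) (ih hW)
  | exL hf hy hΓ hΔ _ ih =>
    intro W hW
    rw [atomicVars_cons_of_not_isAtomic (by rintro ⟨⟩)] at hW
    have := ih (hW.trans (atomicVars_subset_cons _ _))
    rw [cons_swap W] at this
    rw [cons_swap]
    exact .exL hf hy
      (forall_mem_cons.mpr ⟨notMem_freeVars_of_subset_atomicVars hW hΓ, hΓ⟩) hΔ this
  | exR hf _ ih => intro W hW; exact .exR hf (ih hW)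
  | ref t _ ih =>
    intro W hW
    have := ih (hW.trans (atomicVars_subset_cons _ _))
    rw [cons_swap W] at this
    exact .ref t this
  | repl hrp _ ih =>
    intro W hW
    exact .repl (rp_cons W hrp) (ih (hW.trans (atomicVars_subset_of_rp hrp)))

theorem replMinus_equal_symm (s r : L.Term ℕ) (Γ : Multiset (Fm L)) :
    ReplMinus L (Fm.equal r s ::ₘ Fm.equal s r ::ₘ Γ) (Fm.equal r s ::ₘ Fm.equal r r ::ₘ Γ) := by
  obtain ⟨v, hv⟩ := Infinite.exists_notMem_finset (s.varFinset ∪ r.varFinset)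
  rw [Finset.mem_union, not_or] at hv
  have hr : ∀ u, r.subst (Function.update Term.var v u) = r := fun u =>
    Term.subst_eq_self fun w hw => Function.update_of_ne (by rintro rfl; exact hv.2 hw) _ _
  refine ⟨r, s, v, Fm.equal (Term.var v) r, Γ, .equal _ _, ?_, ?_, ?_, ?_⟩
  · exact not_ne_iff.mp (mt tCount_ne_zero_iff.mp hv.2)
  · exact not_ne_iff.mp (mt tCount_ne_zero_iff.mp hv.1)
  all_goals simp [Fm.subst, Fm.ssub, Term.subst, hr]

/-- The symmetry rule Symm is admissible in `G3i^=⁻`: if `s = r, Γ ⇒ Δ` is derivable,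
then so is `r = s, Γ ⇒ Δ`. -/
theorem symm_admissible_G3iEqMinus (L : FirstOrder.Language.{u, v})
    (s r : L.Term ℕ) (Γ Δ : Multiset (Fm L))
    (hd : ∃ n, DerI (ReplMinus L) n (Fm.equal s r ::ₘ Γ) Δ) :
    ∃ n, DerI (ReplMinus L) n (Fm.equal r s ::ₘ Γ) Δ := by
  obtain ⟨n, hd⟩ := hd
  have hweak : DerI (ReplMinus L) n (Fm.equal r s ::ₘ Fm.equal s r ::ₘ Γ) Δ :=
    hd.weaken replMinus_cons atomicVars_subset_of_replMinus fun w hw =>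
      ⟨Fm.equal s r, mem_cons_self _ _, .equal s r, by
        simpa [Fm.freeVars_equal, or_comm] using hw⟩
  have hrepl := DerI.repl (replMinus_equal_symm s r Γ) hweak
  rw [cons_swap] at hrepl
  exact ⟨n + 2, .ref r hrepl⟩
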